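/- arXiv:1401.3941 — 3 statements merged into one kernel-verified Lean document; each statement's English description precedes it below -/
import Mathlib

section
/- Let RG be a region graph satisfying Assumption 1 that is terminal-separable, and let {d_R ∈ F^3 : R ∈ Π} satisfy conditions (1)–(3) with d_R ≠ 0 for all R ∈ Π. Let 𝓘 be a partition of Π (sources in three distinct classes) in which every class satisfies Property (a), and let 𝓘' be the contraction of 𝓘 obtained by merging two connected classes Δ' and Δ'' of 𝓘. Then every class of 𝓘' satisfies Property (a). -/
namespace SumNetworksPaper

/-- `SuperReg Adj Θ R` : `R` belongs to the super region generated by `Θ`: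
the smallest set containing `Θ` and containing every vertex whose parent set
is nonempty and entirely contained in the set. -/
inductive SuperReg {V : Type} (Adj : V → V → Prop) (Θ : Set V) : V → Prop
  | base {R : V} : R ∈ Θ → SuperReg Adj Θ R
  | step {R : V} : (∃ P, Adj P R) → (∀ P, Adj P R → SuperReg Adj Θ P) →
      SuperReg Adj Θ R

/-- The super region `reg(Θ)` as a set. -/
def superReg {V : Type} (Adj : V → V → Prop) (Θ : Set V) : Set V :=
  {R | SuperReg Adj Θ R}

/-- A region graph: a finite directed acyclic simple graph with three source
vertices `S 0, S 1, S 2` (which have no parents) and `n` terminal vertices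
`T 0, …, T (n-1)`, in which every non-source vertex has at least two parents.
`Adj P R` means that there is an edge from `P` to `R`, i.e. `P` is a parent of `R`. -/
structure RegionGraph (n : ℕ) where
  V : Type
  fintypeV : Fintype V
  Adj : V → V → Prop
  acyclic : ∀ v : V, ¬ Relation.TransGen Adj v v
  S : Fin 3 → V
  T : Fin n → V
  S_inj : Function.Injective S
  T_inj : Function.Injective T
  source_no_parent : ∀ (i : Fin 3) (v : V), ¬ Adj v (S i)
  two_parents : ∀ v : V, (∀ i : Fin 3, v ≠ S i) →
    ∃ p q : V, p ≠ q ∧ Adj p v ∧ Adj q v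

namespace RegionGraph

variable {n : ℕ} (G : RegionGraph n)

/-- The super region `reg(Θ)`. -/
def reg (Θ : Set G.V) : Set G.V := superReg G.Adj Θ

/-- `reg°(Θ) = reg(Θ) ∖ Θ`. -/
def regO (Θ : Set G.V) : Set G.V := G.reg Θ \ Θ

/-- `reg(S_i, S_j)`. -/
def regPair (i j : Fin 3) : Set G.V := G.reg {G.S i, G.S j}

/-- `u → v` : there is a directed path from `u` to `v` (possibly trivial). -/
def Reaches (u v : G.V) : Prop := Relation.ReflTransGen G.Adj u v

/-- `Π = reg(S_1,S_2) ∪ reg(S_1,S_3) ∪ reg(S_2,S_3)`. -/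
def bigPi : Set G.V := G.regPair 0 1 ∪ G.regPair 0 2 ∪ G.regPair 1 2

/-- `Ω_I` : vertices outside `Π` reaching exactly the terminals `T j`, `j ∈ I`. -/
def Omega (I : Set (Fin n)) : Set G.V :=
  {R | R ∉ G.bigPi ∧ ∀ j : Fin n, j ∈ I ↔ G.Reaches R (G.T j)}

/-- `Λ_I` : vertices of `Π` having a child in `Ω_I`. -/
def Lambda (I : Set (Fin n)) : Set G.V :=
  {Q | Q ∈ G.bigPi ∧ ∃ R, G.Adj Q R ∧ R ∈ G.Omega I}

/-- Assumption 1: no terminal vertex lies in `Π`. -/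
def Assumption1 : Prop := ∀ j : Fin n, G.T j ∉ G.bigPi

/-- Terminal-separability: `Ω_I = ∅` whenever `|I| > 1`. -/
def TerminalSeparable : Prop :=
  ∀ I : Set (Fin n), 1 < I.ncard → G.Omega I = ∅

/-- A linear code of the region graph over `F`. -/
def IsLinearCode (F : Type) [Field F] (d : G.V → Fin 3 → F) : Prop :=
  (∀ i : Fin 3, d (G.S i) = Pi.single i 1) ∧
  ∀ v : G.V, (∀ i : Fin 3, v ≠ G.S i) →
    d v ∈ Submodule.span F (d '' {p | G.Adj p v})

/-- A linear solution: a linear code giving `ᾱ = (1,1,1)` at every terminal. -/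
def IsLinearSolution (F : Type) [Field F] (d : G.V → Fin 3 → F) : Prop :=
  G.IsLinearCode F d ∧ ∀ j : Fin n, d (G.T j) = fun _ => 1

/-- Feasibility: existence of a linear solution over some finite field. -/
def Feasible : Prop :=
  ∃ (F : Type) (_ : Field F) (_ : Fintype F) (d : G.V → Fin 3 → F),
    G.IsLinearSolution F d

/-- Conditions (1)–(3) on a family `{d_R : R ∈ Π}`. -/
def Conds123 (F : Type) [Field F] (d : G.V → Fin 3 → F) : Prop :=
  (∀ i : Fin 3, d (G.S i) = Pi.single i 1) ∧
  (∀ R ∈ G.bigPi, (∀ i : Fin 3, R ≠ G.S i) →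
    d R ∈ Submodule.span F (d '' {p | G.Adj p R})) ∧
  ∀ j : Fin n, (fun _ => (1 : F)) ∈ Submodule.span F (d '' G.Lambda {j})

/-- `I` is a partition of `Π` into nonempty classes. -/
def IsPartitionOfPi (I : Set (Set G.V)) : Prop :=
  (∀ Δ ∈ I, Δ.Nonempty ∧ Δ ⊆ G.bigPi) ∧
  ⋃₀ I = G.bigPi ∧
  ∀ Δ ∈ I, ∀ Δ' ∈ I, Δ ≠ Δ' → Δ ∩ Δ' = ∅

/-- The three sources lie in three distinct classes of the partition. -/
def SourcesSeparated (I : Set (Set G.V)) : Prop :=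
  ∀ Δ ∈ I, ∀ i j : Fin 3, G.S i ∈ Δ → G.S j ∈ Δ → i = j

/-- `[S_i]_i = [S_i]_{i,j₁} ∪ [S_i]_{i,j₂}` for the class `Δ` of `S_i`. -/
def srcSub (i : Fin 3) (Δ : Set G.V) : Set G.V :=
  Δ ∩ ⋃ (j : Fin 3) (_ : j ≠ i), G.regPair i j

/-- `X` is a subclass of the class `Δ`. -/
def IsSubclass (Δ X : Set G.V) : Prop :=
  (∃ i : Fin 3, G.S i ∈ Δ ∧
    (X = G.srcSub i Δ ∨
      ∃ j k : Fin 3, j ≠ k ∧ j ≠ i ∧ k ≠ i ∧ X = Δ ∩ G.regPair j k)) ∨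
  ((∀ i : Fin 3, G.S i ∉ Δ) ∧ ∃ i j : Fin 3, i ≠ j ∧ X = Δ ∩ G.regPair i j)

/-- The two classes `Δ'`, `Δ''` are connected. -/
def ClassesConnected (Δ' Δ'' : Set G.V) : Prop :=
  (∃ (j : Fin n) (X' X'' : Set G.V),
      G.IsSubclass Δ' X' ∧ G.IsSubclass Δ'' X'' ∧ G.Lambda {j} ⊆ X' ∪ X'') ∨
  ∃ i j : Fin 3, i ≠ j ∧
    (G.reg (Δ' ∩ G.regPair i j) ∩ G.reg (Δ'' ∩ G.regPair i j)).Nonempty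

/-- The partition `I` of `Π` is compatible. -/
def Compatible (I : Set (Set G.V)) : Prop :=
  G.SourcesSeparated I ∧
  (∀ Δ' ∈ I, ∀ Δ'' ∈ I, Δ' ≠ Δ'' → ¬ G.ClassesConnected Δ' Δ'') ∧
  ∀ (j : Fin n) (i₁ i₂ : Fin 3), i₁ ≠ i₂ →
    ∀ Δ₁ ∈ I, ∀ Δ₂ ∈ I, G.S i₁ ∈ Δ₁ → G.S i₂ ∈ Δ₂ →
      ¬ (G.Lambda {j} ⊆ G.srcSub i₁ Δ₁ ∪ G.srcSub i₂ Δ₂ ∪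
          ⋃₀ {X : Set G.V | ∃ Δ ∈ I, (∀ i : Fin 3, G.S i ∉ Δ) ∧
                X = Δ ∩ G.regPair i₁ i₂})

/-- `I'` is obtained from `I` by merging two connected classes. -/
def IsContractionStep (I I' : Set (Set G.V)) : Prop :=
  ∃ Δ' Δ'', Δ' ∈ I ∧ Δ'' ∈ I ∧ Δ' ≠ Δ'' ∧ G.ClassesConnected Δ' Δ'' ∧
    I' = insert (Δ' ∪ Δ'') (I \ {Δ', Δ''})

/-- The trivial partition of `Π` into singletons. -/
def trivialPartition : Set (Set G.V) := {X | ∃ R ∈ G.bigPi, X = {R}}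

/-- `Ic` is a character partition of `Π`. -/
def IsCharacterPartition (Ic : Set (Set G.V)) : Prop :=
  ∃ (L : ℕ) (c : ℕ → Set (Set G.V)),
    c 0 = G.trivialPartition ∧ c L = Ic ∧
    (∀ ℓ < L, G.SourcesSeparated (c ℓ) ∧ G.IsContractionStep (c ℓ) (c (ℓ + 1))) ∧
    ((∃ Δ ∈ Ic, ∃ i j : Fin 3, i ≠ j ∧ G.S i ∈ Δ ∧ G.S j ∈ Δ) ∨
      ∀ Δ' ∈ Ic, ∀ Δ'' ∈ Ic, Δ' ≠ Δ'' → ¬ G.ClassesConnected Δ' Δ'')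

/-- Property (a): `d_{Q'} ∈ span{d_Q, ᾱ}` for all `Q, Q'` in the class `Δ`. -/
def PropertyA (F : Type) [Field F] (d : G.V → Fin 3 → F) (Δ : Set G.V) : Prop :=
  ∀ Q ∈ Δ, ∀ Q' ∈ Δ, d Q' ∈ Submodule.span F {d Q, fun _ => (1 : F)}

end RegionGraph

/-- Condition (C-IR) for a region graph with three terminals. -/
def RegionGraph.CIR (G : RegionGraph 3) : Prop :=
  ∃ (σ τ : Equiv.Perm (Fin 3)) (P₁ P₂ : G.V),
    P₁ ∈ G.regO {G.S (σ 1), G.S (σ 2)} ∧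
    P₂ ∈ G.regO {G.S (σ 0), G.S (σ 1)} ∧
    G.Lambda {τ 0} = {G.S (σ 0), P₁} ∧
    G.Lambda {τ 1} = {P₁, P₂} ∧
    G.Lambda {τ 2} ⊆ G.reg {G.S (σ 0), P₂} ∪ G.reg {G.S (σ 0), G.S (σ 2)}


namespace RegionGraph

variable {n : ℕ} (G : RegionGraph n)

lemma reg_subset_closed {Θ C : Set G.V} (hΘ : Θ ⊆ C)
    (hC : ∀ R : G.V, (∃ P, G.Adj P R) → (∀ P, G.Adj P R → P ∈ C) → R ∈ C) :
    G.reg Θ ⊆ C := by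
  intro x hx
  have hx' : SuperReg G.Adj Θ x := hx
  induction hx' with
  | base h => exact hΘ h
  | step h h2 ih => exact hC _ h fun P hp => ih P hp (h2 P hp)

lemma reg_subset_regPair {i j : Fin 3} {Θ : Set G.V} (hΘ : Θ ⊆ G.regPair i j) :
    G.reg Θ ⊆ G.regPair i j :=
  G.reg_subset_closed hΘ (fun _ h hall => SuperReg.step h hall)

lemma regPair_subset_bigPi {i j : Fin 3} (hij : i ≠ j) :
    G.regPair i j ⊆ G.bigPi := by
  have hcomm : ∀ a b : Fin 3, G.regPair a b = G.regPair b a := by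
    intro a b
    show superReg G.Adj {G.S a, G.S b} = superReg G.Adj {G.S b, G.S a}
    rw [Set.pair_comm]
  have h01 : G.regPair 0 1 ⊆ G.bigPi := fun x hx => Or.inl (Or.inl hx)
  have h02 : G.regPair 0 2 ⊆ G.bigPi := fun x hx => Or.inl (Or.inr hx)
  have h12 : G.regPair 1 2 ⊆ G.bigPi := fun x hx => Or.inr hx
  fin_cases i <;> fin_cases j <;>
    first
      | exact absurd rfl hij
      | exact h01 | exact h02 | exact h12
      | (rw [hcomm]; first | exact h01 | exact h02 | exact h12)

lemma d_mem_span_of_mem_reg {F : Type} [Field F] {d : G.V → Fin 3 → F}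
    (hd : G.Conds123 F d) {i j : Fin 3} (hij : i ≠ j) {Θ : Set G.V}
    (hΘ : Θ ⊆ G.regPair i j) {y : G.V} (hy : y ∈ G.reg Θ) :
    d y ∈ Submodule.span F (d '' Θ) := by
  have hy' : SuperReg G.Adj Θ y := hy
  clear hy
  induction hy' with
  | base h => exact Submodule.subset_span ⟨_, h, rfl⟩
  | @step R hP hall ih =>
    have hR : R ∈ G.regPair i j :=
      G.reg_subset_regPair hΘ (SuperReg.step hP hall)
    have hbig : R ∈ G.bigPi := G.regPair_subset_bigPi hij hR
    have hns : ∀ i0 : Fin 3, R ≠ G.S i0 := by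
      intro i0 hEq
      obtain ⟨P, hPadj⟩ := hP
      exact G.source_no_parent i0 P (hEq ▸ hPadj)
    have h2 := hd.2.1 R hbig hns
    have hle : Submodule.span F (d '' {p | G.Adj p R}) ≤
        Submodule.span F (d '' Θ) := by
      rw [Submodule.span_le]
      rintro _ ⟨P, hPadj, rfl⟩
      exact ih P hPadj
    exact hle h2

lemma coord_zero_of_pairSpan {F : Type} [Field F] {u : Fin 3 → F}
    {i j k : Fin 3} (hki : k ≠ i) (hkj : k ≠ j)
    (hu : u ∈ Submodule.span F
      {(Pi.single i 1 : Fin 3 → F), Pi.single j 1}) : u k = 0 := by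
  rw [Submodule.mem_span_pair] at hu
  obtain ⟨a, b, rfl⟩ := hu
  simp [Pi.single_eq_of_ne hki, Pi.single_eq_of_ne hkj]

lemma d_mem_pairSpan_of_regPair {F : Type} [Field F] {d : G.V → Fin 3 → F}
    (hd : G.Conds123 F d) {i j : Fin 3} (hij : i ≠ j) {y : G.V}
    (hy : y ∈ G.regPair i j) :
    d y ∈ Submodule.span F {(Pi.single i 1 : Fin 3 → F), Pi.single j 1} := by
  have h := G.d_mem_span_of_mem_reg hd hij
    (Θ := {G.S i, G.S j}) (fun x hx => SuperReg.base hx) hy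
  rwa [Set.image_pair, hd.1 i, hd.1 j] at h

lemma subclass_subset {Δ X : Set G.V} (h : G.IsSubclass Δ X) : X ⊆ Δ := by
  rcases h with ⟨i, _, (rfl | ⟨j, k, _, _, _, rfl⟩)⟩ | ⟨_, i, j, _, rfl⟩
  · exact Set.inter_subset_left
  · exact Set.inter_subset_left
  · exact Set.inter_subset_left

lemma subclass_coord {F : Type} [Field F] {d : G.V → Fin 3 → F}
    (hd : G.Conds123 F d) {Δ X : Set G.V} (hsub : G.IsSubclass Δ X)
    (hPa : G.PropertyA F d Δ) :
    ∃ k : Fin 3, ∀ u ∈ Submodule.span F (d '' X), u k = 0 := by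
  suffices h : ∃ k : Fin 3, ∀ q ∈ X, d q k = 0 by
    obtain ⟨k, hk⟩ := h
    refine ⟨k, fun u hu => ?_⟩
    have hle : Submodule.span F (d '' X) ≤
        LinearMap.ker (LinearMap.proj k : (Fin 3 → F) →ₗ[F] F) := by
      rw [Submodule.span_le]
      rintro _ ⟨q, hq, rfl⟩
      exact hk q hq
    exact hle hu
  have third : ∀ a b : Fin 3, a ≠ b → ∃ k : Fin 3, k ≠ a ∧ k ≠ b := by decide
  rcases hsub with ⟨i, hSi, (hX | ⟨a, b, hab, _, _, rfl⟩)⟩ | ⟨_, a, b, hab, rfl⟩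
  · obtain ⟨k, hki⟩ := exists_ne i
    refine ⟨k, fun q hq => ?_⟩
    subst hX
    simp only [srcSub, Set.mem_inter_iff, Set.mem_iUnion] at hq
    obtain ⟨hqΔ, j, hji, hqp⟩ := hq
    obtain ⟨k0, hk0i, hk0j⟩ := third i j (Ne.symm hji)
    have h1 := G.d_mem_pairSpan_of_regPair hd (Ne.symm hji) hqp
    have hz : d q k0 = 0 := coord_zero_of_pairSpan hk0i hk0j h1
    have h2 : d q ∈ Submodule.span F {d (G.S i), fun _ => (1:F)} :=
      hPa (G.S i) hSi q hqΔ
    rw [hd.1 i, Submodule.mem_span_pair] at h2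
    obtain ⟨A, B, hAB⟩ := h2
    have hB : B = 0 := by
      have h := congrFun hAB k0
      simpa [Pi.single_eq_of_ne hk0i, hz] using h
    have h := congrFun hAB k
    simp only [Pi.add_apply, Pi.smul_apply, smul_eq_mul,
      Pi.single_eq_of_ne hki, hB, mul_zero, mul_one, add_zero, zero_add] at h
    exact h.symm
  · obtain ⟨k, hka, hkb⟩ := third a b hab
    exact ⟨k, fun q hq =>
      coord_zero_of_pairSpan hka hkb (G.d_mem_pairSpan_of_regPair hd hab hq.2)⟩
  · obtain ⟨k, hka, hkb⟩ := third a b hab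
    exact ⟨k, fun q hq =>
      coord_zero_of_pairSpan hka hkb (G.d_mem_pairSpan_of_regPair hd hab hq.2)⟩

lemma key {F : Type} [Field F] {d : G.V → Fin 3 → F} {Δ₁ Δ₂ : Set G.V}
    (h1 : G.PropertyA F d Δ₁) (h2 : G.PropertyA F d Δ₂)
    {u₁ u₂ : Fin 3 → F}
    (hu1 : u₁ ∈ Submodule.span F (d '' Δ₁))
    (hu2 : u₂ ∈ Submodule.span F (d '' Δ₂))
    (hu2ne : ∀ c : F, u₂ ≠ c • (fun _ => (1:F)))
    (h21 : u₂ ∈ Submodule.span F {u₁, fun _ => (1:F)})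
    {Q Q'' : G.V} (hQ : Q ∈ Δ₁) (hQ'' : Q'' ∈ Δ₂) :
    d Q'' ∈ Submodule.span F {d Q, fun _ => (1:F)} := by
  have hone : (fun _ => (1:F)) ∈ Submodule.span F {d Q, fun _ => (1:F)} :=
    Submodule.subset_span (Or.inr rfl)
  have hle1 : Submodule.span F (d '' Δ₁) ≤
      Submodule.span F {d Q, fun _ => (1:F)} := by
    rw [Submodule.span_le]
    rintro _ ⟨q, hq, rfl⟩
    exact h1 Q hQ q hq
  have hle2 : Submodule.span F (d '' Δ₂) ≤
      Submodule.span F {d Q'', fun _ => (1:F)} := by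
    rw [Submodule.span_le]
    rintro _ ⟨q, hq, rfl⟩
    exact h2 Q'' hQ'' q hq
  have hu2' := hle2 hu2
  rw [Submodule.mem_span_pair] at hu2'
  obtain ⟨a, b, hab⟩ := hu2'
  have ha : a ≠ 0 := by
    rintro rfl
    refine hu2ne b ?_
    rw [← hab]
    simp
  have hu2mem : u₂ ∈ Submodule.span F {d Q, fun _ => (1:F)} := by
    refine (Submodule.span_le.mpr ?_ : Submodule.span F {u₁, fun _ => (1:F)} ≤ _) h21
    rintro x (rfl | rfl)
    · exact hle1 hu1
    · exact hone
  have hdQ : d Q'' = a⁻¹ • (u₂ - b • (fun _ => (1:F))) := by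
    rw [← hab, add_sub_cancel_right, smul_smul, inv_mul_cancel₀ ha, one_smul]
  rw [hdQ]
  exact Submodule.smul_mem _ _
    (Submodule.sub_mem _ hu2mem (Submodule.smul_mem _ _ hone))


end RegionGraph

/-- Merging two connected classes of a partition of `Π` whose classes all
satisfy Property (a) yields a partition whose classes all satisfy
Property (a). -/
theorem contraction_preserves_propertyA {n : ℕ} (G : RegionGraph n)
    (hA : G.Assumption1) (hTS : G.TerminalSeparable)
    (F : Type) [Field F] [Fintype F] (d : G.V → Fin 3 → F)
    (hd : G.Conds123 F d) (hnz : ∀ R ∈ G.bigPi, d R ≠ 0)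
    (I : Set (Set G.V)) (hpart : G.IsPartitionOfPi I)
    (hsep : G.SourcesSeparated I)
    (hall : ∀ Δ ∈ I, G.PropertyA F d Δ)
    (Δ' Δ'' : Set G.V) (hΔ' : Δ' ∈ I) (hΔ'' : Δ'' ∈ I) (hne : Δ' ≠ Δ'')
    (hconn : G.ClassesConnected Δ' Δ'')
    (I' : Set (Set G.V)) (hI' : I' = insert (Δ' ∪ Δ'') (I \ {Δ', Δ''})) :
    ∀ Δ ∈ I', G.PropertyA F d Δ := by
  subst hI'
  intro Δ hΔ
  rcases Set.mem_insert_iff.mp hΔ with rfl | hmem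
  · have hPa' := hall Δ' hΔ'
    have hPa'' := hall Δ'' hΔ''
    obtain ⟨u', u'', hu'1, hu''2, hu'ne, hu''ne, h12, h21⟩ :
        ∃ u' u'' : Fin 3 → F,
          u' ∈ Submodule.span F (d '' Δ') ∧
          u'' ∈ Submodule.span F (d '' Δ'') ∧
          (∀ c : F, u' ≠ c • (fun _ => (1:F))) ∧
          (∀ c : F, u'' ≠ c • (fun _ => (1:F))) ∧
          u' ∈ Submodule.span F {u'', fun _ => (1:F)} ∧
          u'' ∈ Submodule.span F {u', fun _ => (1:F)} := by
      rcases hconn with ⟨j, X', X'', hsub', hsub'', hLam⟩ | ⟨i, j, hij, y, hy', hy''⟩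
      · have h3 := hd.2.2 j
        have hle : Submodule.span F (d '' G.Lambda {j}) ≤
            Submodule.span F (d '' X') ⊔ Submodule.span F (d '' X'') := by
          rw [← Submodule.span_union, ← Set.image_union]
          exact Submodule.span_mono (Set.image_mono hLam)
        obtain ⟨u', hu', u'', hu'', hsum⟩ := Submodule.mem_sup.mp (hle h3)
        obtain ⟨k', hk'⟩ := G.subclass_coord hd hsub' hPa'
        obtain ⟨k'', hk''⟩ := G.subclass_coord hd hsub'' hPa''
        have hz' : u' k' = 0 := hk' u' hu'
        have hz'' : u'' k'' = 0 := hk'' u'' hu''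
        have hne' : ∀ c : F, u' ≠ c • (fun _ => (1:F)) := by
          intro c hc
          have hc0 : c = 0 := by
            have h := congrFun hc k'
            rw [hz'] at h
            simpa using h.symm
          have hu'0 : u' = 0 := by rw [hc, hc0, zero_smul]
          have h1 : u'' k'' = 1 := by
            have h := congrFun hsum k''
            rw [hu'0] at h
            simpa using h
          rw [hz''] at h1
          exact zero_ne_one h1
        have hne'' : ∀ c : F, u'' ≠ c • (fun _ => (1:F)) := by
          intro c hc
          have hc0 : c = 0 := by
            have h := congrFun hc k''
            rw [hz''] at h
            simpa using h.symm
          have hu''0 : u'' = 0 := by rw [hc, hc0, zero_smul]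
          have h1 : u' k' = 1 := by
            have h := congrFun hsum k'
            rw [hu''0] at h
            simpa using h
          rw [hz'] at h1
          exact zero_ne_one h1
        have hu'D : u' ∈ Submodule.span F (d '' Δ') :=
          Submodule.span_mono (Set.image_mono (G.subclass_subset hsub')) hu'
        have hu''D : u'' ∈ Submodule.span F (d '' Δ'') :=
          Submodule.span_mono (Set.image_mono (G.subclass_subset hsub'')) hu''
        refine ⟨u', u'', hu'D, hu''D, hne', hne'', ?_, ?_⟩
        · rw [eq_sub_of_add_eq hsum]
          exact Submodule.sub_mem _ (Submodule.subset_span (Or.inr rfl))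
            (Submodule.subset_span (Or.inl rfl))
        · rw [eq_sub_of_add_eq' hsum]
          exact Submodule.sub_mem _ (Submodule.subset_span (Or.inr rfl))
            (Submodule.subset_span (Or.inl rfl))
      · have hΘ' : Δ' ∩ G.regPair i j ⊆ G.regPair i j := Set.inter_subset_right
        have hΘ'' : Δ'' ∩ G.regPair i j ⊆ G.regPair i j := Set.inter_subset_right
        have h1 : d y ∈ Submodule.span F (d '' Δ') :=
          Submodule.span_mono (Set.image_mono Set.inter_subset_left)
            (G.d_mem_span_of_mem_reg hd hij hΘ' hy')
        have h2 : d y ∈ Submodule.span F (d '' Δ'') :=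
          Submodule.span_mono (Set.image_mono Set.inter_subset_left)
            (G.d_mem_span_of_mem_reg hd hij hΘ'' hy'')
        have hyp : y ∈ G.regPair i j := G.reg_subset_regPair hΘ' hy'
        have third : ∀ a b : Fin 3, a ≠ b → ∃ k : Fin 3, k ≠ a ∧ k ≠ b := by
          decide
        obtain ⟨k, hki, hkj⟩ := third i j hij
        have hz : d y k = 0 :=
          RegionGraph.coord_zero_of_pairSpan hki hkj
            (G.d_mem_pairSpan_of_regPair hd hij hyp)
        have hynz : d y ≠ 0 := hnz y (G.regPair_subset_bigPi hij hyp)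
        have hne : ∀ c : F, d y ≠ c • (fun _ => (1:F)) := by
          intro c hc
          have hc0 : c = 0 := by
            have h := congrFun hc k
            rw [hz] at h
            simpa using h.symm
          rw [hc0, zero_smul] at hc
          exact hynz hc
        have hself : d y ∈ Submodule.span F {d y, fun _ => (1:F)} :=
          Submodule.subset_span (Or.inl rfl)
        exact ⟨d y, d y, h1, h2, hne, hne, hself, hself⟩
    intro Q hQ Qp hQp
    rcases hQ with hQ | hQ <;> rcases hQp with hQp | hQp
    · exact hPa' Q hQ Qp hQp
    · exact G.key hPa' hPa'' hu'1 hu''2 hu''ne h21 hQ hQp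
    · exact G.key hPa'' hPa' hu''2 hu'1 hu'ne h12 hQ hQp
    · exact hPa'' Q hQ Qp hQp
  · exact hall Δ hmem.1


end SumNetworksPaper
end

section
/- Let RG be a region graph with exactly two terminal vertices (n = 2) satisfying Assumption 1. Then RG is feasible. -/
namespace SumNetworksPaper

namespace TwoTerm

abbrev Fq := ZMod 5
abbrev Vec3 := Fin 3 → Fq

abbrev Class := Fin 3 ⊕ Fin 3

def cmpl : Fin 3 → Fin 3 := ![2, 1, 0]

def okB (i : Fin 3) : Class → Bool
  | .inl k => k = i
  | .inr r => i ≠ cmpl r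

def ok (i : Fin 3) (c : Class) : Prop := okB i c = true

instance (i : Fin 3) (c : Class) : Decidable (ok i c) :=
  inferInstanceAs (Decidable (_ = true))

inductive Min where
  | msrc : Min
  | mk (k : Fin 3) : Min
  | mp (x : Fin 3) : Min
  deriving DecidableEq

def Min.all : List Min := [.msrc, .mk 0, .mk 1, .mk 2, .mp 0, .mp 1, .mp 2]

instance : Fintype Min :=
  ⟨⟨Min.all, by decide⟩, fun x => by
    cases x with
    | msrc => decide
    | mk k => fin_cases k <;> decide
    | mp x => fin_cases x <;> decide⟩

def mpA : Fin 3 → Fin 3 := ![1, 0, 0]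
def mpB : Fin 3 → Fin 3 := ![2, 2, 1]

def classesOf : Min → Fin 3 → Class
  | .msrc => ![.inl 0, .inl 1, .inl 2]
  | .mk k => ![.inl k, .inr (cmpl k), .inr (cmpl k)]
  | .mp x => ![.inr (mpA x), .inr (mpB x), .inr (mpA x)]

abbrev hasReg (c : Fin 3 → Class) (r : Fin 3) : Prop :=
  c 0 = .inr r ∨ c 1 = .inr r ∨ c 2 = .inr r

def minrep (c : Fin 3 → Class) : Min :=
  if hasReg c 0 ∧ hasReg c 1 then .mp 2
  else if hasReg c 0 ∧ hasReg c 2 then .mp 1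
  else if hasReg c 1 ∧ hasReg c 2 then .mp 0
  else if hasReg c 0 then .mk 2
  else if hasReg c 1 then .mk 1
  else if hasReg c 2 then .mk 0
  else .msrc

set_option maxRecDepth 100000 in
theorem minsub : ∀ c : Fin 3 → Class, (∀ i, ok i (c i)) →
    ∀ i, classesOf (minrep c) i = c 0 ∨ classesOf (minrep c) i = c 1 ∨
      classesOf (minrep c) i = c 2 := by decide

-- witness tables
def sd : Fin 3 → Vec3 := ![![1,1,0], ![1,0,1], ![0,1,1]]
def solo : Fin 3 → Fin 3 → Vec3 :=
  ![![![1,1,0], ![1,0,1], ![0,1,0]],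
    ![![1,1,0], ![1,0,1], ![0,0,1]],
    ![![1,1,0], ![0,0,1], ![0,1,1]]]
def altsolo : Fin 3 → Fin 3 → Vec3 :=
  ![![![1,1,0], ![1,0,0], ![0,1,1]],
    ![![1,0,0], ![1,0,1], ![0,1,1]],
    ![![0,1,0], ![1,0,1], ![0,1,1]]]
def shared : Fin 3 → Fin 3 → Vec3 :=
  ![![![1,2,0], ![3,0,1], ![0,4,1]],
    ![![3,1,0], ![1,0,2], ![0,1,4]],
    ![![1,3,0], ![1,0,4], ![0,1,2]]]

def wit1 : Min → Fin 3 → Vec3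
  | .msrc => sd
  | .mk _ => sd
  | .mp x => solo x

def mkmp (k x : Fin 3) : Fin 3 → Vec3 :=
  if cmpl k = mpB x then altsolo x else solo x

def wit : Min → Min → Fin 3 → Vec3
  | .msrc, m' => wit1 m'
  | m, .msrc => wit1 m
  | .mk _, .mk _ => sd
  | .mk k, .mp x => mkmp k x
  | .mp x, .mk k => mkmp k x
  | .mp x, .mp x' => if x = x' then solo x else shared (0 - x - x')

def val (g : Fin 3 → Vec3) : Class → Vec3
  | .inl k => fun j => if j = k then 1 else 0
  | .inr r => g r

abbrev condD (m : Min) (g : Fin 3 → Vec3) : Prop :=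
  ∃ a : Fin 3 → Fq,
    (a 0 • val g (classesOf m 0) + a 1 • val g (classesOf m 1) +
      a 2 • val g (classesOf m 2)) = fun _ => (1 : Fq)

set_option maxRecDepth 100000 in
theorem solve : ∀ m m' : Min, condD m (wit m m') ∧ condD m' (wit m m') := by decide

set_option maxRecDepth 100000 in
theorem witplane : ∀ m m' : Min,
    (wit m m' 0) 2 = 0 ∧ (wit m m' 1) 1 = 0 ∧ (wit m m' 2) 0 = 0 := by decide


open Relation

variable {n : ℕ} (G : RegionGraph n)

section Basic

/-- well-foundedness of the parent relation (parents are smaller). -/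
lemma wf_up : WellFounded (fun a b : G.V => G.Adj a b) := by
  letI := G.fintypeV
  haveI : IsTrans G.V (TransGen G.Adj) := ⟨fun _ _ _ => TransGen.trans⟩
  haveI : IsIrrefl G.V (TransGen G.Adj) := ⟨G.acyclic⟩
  exact Subrelation.wf (fun h => TransGen.single h)
    (Finite.wellFounded_of_trans_of_irrefl (TransGen G.Adj))

/-- well-foundedness of the child relation (children are smaller). -/
lemma wf_down : WellFounded (fun a b : G.V => G.Adj b a) := by
  letI := G.fintypeV
  haveI : IsTrans G.V (TransGen (Function.swap G.Adj)) := ⟨fun _ _ _ => TransGen.trans⟩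
  haveI : IsIrrefl G.V (TransGen (Function.swap G.Adj)) := by
    constructor
    intro a ha
    exact G.acyclic a (TransGen.swap (r := Function.swap G.Adj) _ _ ha)
  exact Subrelation.wf (r := TransGen (Function.swap G.Adj))
    (fun h => TransGen.single h) (Finite.wellFounded_of_trans_of_irrefl _)

lemma adj_ne {u v : G.V} (h : G.Adj u v) : u ≠ v := by
  rintro rfl
  exact G.acyclic u (TransGen.single h)

lemma reaches_src {u : G.V} {k : Fin 3} (h : G.Reaches u (G.S k)) : u = G.S k := by
  rcases Relation.ReflTransGen.cases_tail h with h | ⟨c, _, hc⟩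
  · exact h.symm
  · exact absurd hc (G.source_no_parent k c)

/-- parents of a vertex of `reg {S i, S j}` belong to `reg {S i, S j}`. -/
lemma regPair_parent {i j : Fin 3} {v u : G.V} (hv : v ∈ G.regPair i j)
    (hu : G.Adj u v) : u ∈ G.regPair i j := by
  cases hv with
  | base hb =>
    rcases hb with hb | hb <;> subst hb
    · exact absurd hu (G.source_no_parent i u)
    · exact absurd hu (G.source_no_parent j u)
  | step hex hall => exact hall u hu

lemma src_mem_regPair {i j k : Fin 3} (h : G.S k ∈ G.regPair i j) :
    k = i ∨ k = j := by
  cases h with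
  | base hb =>
    rcases hb with hb | hb
    · exact Or.inl (G.S_inj hb)
    · exact Or.inr (G.S_inj hb)
  | step hex hall =>
    rcases hex with ⟨p, hp⟩
    exact absurd hp (G.source_no_parent k p)

/-- backward closure of a pair region under reachability. -/
lemma regPair_reaches {i j : Fin 3} {u v : G.V} (hv : v ∈ G.regPair i j)
    (huv : G.Reaches u v) : u ∈ G.regPair i j := by
  induction huv using Relation.ReflTransGen.head_induction_on with
  | refl => exact hv
  | head h _ ih => exact regPair_parent G ih h

lemma reach_of_regPair {i j k : Fin 3} {v : G.V} (hv : v ∈ G.regPair i j)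
    (h : G.Reaches (G.S k) v) : k = i ∨ k = j :=
  src_mem_regPair G (regPair_reaches G hv h)

lemma regPair_of_reach {i j : Fin 3} {v : G.V}
    (h : ∀ k, G.Reaches (G.S k) v → k = i ∨ k = j) : v ∈ G.regPair i j := by
  induction v using (wf_up G).induction with
  | _ v ih =>
    by_cases hs : ∃ k, v = G.S k
    · rcases hs with ⟨k, rfl⟩
      rcases h k ReflTransGen.refl with h | h <;> subst h
      · exact SuperReg.base (Or.inl rfl)
      · exact SuperReg.base (Or.inr rfl)
    · push_neg at hs
      rcases G.two_parents v hs with ⟨p, q, _, hp, hq⟩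
      refine SuperReg.step ⟨p, hp⟩ (fun u hu => ih u hu (fun k hk => ?_))
      exact h k (hk.tail hu)

/-- every non-source vertex is reached by two distinct sources. -/
lemma two_srcs {v : G.V} (hv : ∀ i : Fin 3, v ≠ G.S i) :
    ∃ k l : Fin 3, k ≠ l ∧ G.Reaches (G.S k) v ∧ G.Reaches (G.S l) v := by
  induction v using (wf_up G).induction with
  | _ v ih =>
    rcases G.two_parents v hv with ⟨p, q, hpq, hp, hq⟩
    by_cases hps : ∃ a, p = G.S a
    · rcases hps with ⟨a, rfl⟩
      by_cases hqs : ∃ b, q = G.S b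
      · rcases hqs with ⟨b, rfl⟩
        refine ⟨a, b, fun hab => hpq (by rw [hab]), ?_, ?_⟩
        · exact ReflTransGen.single hp
        · exact ReflTransGen.single hq
      · push_neg at hqs
        rcases ih q hq hqs with ⟨k, l, hkl, hk, hl⟩
        exact ⟨k, l, hkl, hk.tail hq, hl.tail hq⟩
    · push_neg at hps
      rcases ih p hp hps with ⟨k, l, hkl, hk, hl⟩
      exact ⟨k, l, hkl, hk.tail hp, hl.tail hp⟩

lemma S_mem_bigPi (i : Fin 3) : G.S i ∈ G.bigPi := by
  fin_cases i
  · exact Or.inl (Or.inl (SuperReg.base (Or.inl rfl)))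
  · exact Or.inl (Or.inl (SuperReg.base (Or.inr rfl)))
  · exact Or.inl (Or.inr (SuperReg.base (Or.inr rfl)))

/-- A vertex is outside `Π` iff all three sources reach it. -/
lemma notPi_iff {v : G.V} : v ∉ G.bigPi ↔ ∀ k, G.Reaches (G.S k) v := by
  constructor
  · intro hv k
    by_contra hk
    apply hv
    fin_cases k
    · refine Or.inr (regPair_of_reach G (fun m hm => ?_))
      fin_cases m
      · exact absurd hm hk
      · exact Or.inl rfl
      · exact Or.inr rfl
    · refine Or.inl (Or.inr (regPair_of_reach G (fun m hm => ?_)))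
      fin_cases m
      · exact Or.inl rfl
      · exact absurd hm hk
      · exact Or.inr rfl
    · refine Or.inl (Or.inl (regPair_of_reach G (fun m hm => ?_)))
      fin_cases m
      · exact Or.inl rfl
      · exact Or.inr rfl
      · exact absurd hm hk
  · intro h hv
    have : ∀ i j : Fin 3, v ∈ G.regPair i j → False := by
      intro i j hij
      have h0 := reach_of_regPair G hij (h 0)
      have h1 := reach_of_regPair G hij (h 1)
      have h2 := reach_of_regPair G hij (h 2)
      fin_cases i <;> fin_cases j <;> simp_all
    rcases hv with (hv | hv) | hv
    · exact this 0 1 hv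
    · exact this 0 2 hv
    · exact this 1 2 hv

/-- descendants of full vertices are full. -/
lemma notPi_reaches {u v : G.V} (hu : u ∉ G.bigPi) (huv : G.Reaches u v) :
    v ∉ G.bigPi :=
  (notPi_iff G).mpr (fun k => ((notPi_iff G).mp hu k).trans huv)

/-- parents of a `Π`-vertex are in `Π`. -/
lemma bigPi_parent {v u : G.V} (hv : v ∈ G.bigPi) (hu : G.Adj u v) :
    u ∈ G.bigPi := by
  rcases hv with (hv | hv) | hv
  · exact Or.inl (Or.inl (regPair_parent G hv hu))
  · exact Or.inl (Or.inr (regPair_parent G hv hu))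
  · exact Or.inr (regPair_parent G hv hu)

end Basic

section Cover

open Classical

variable {n : ℕ} (G : RegionGraph n)

/-- step relation through full (non-`Π`) vertices. -/
def Fadj (a b : G.V) : Prop := G.Adj a b ∧ a ∉ G.bigPi ∧ b ∉ G.bigPi

/-- full-path reachability. -/
def FR (u v : G.V) : Prop := Relation.ReflTransGen (Fadj G) u v

lemma FR_reaches {u v : G.V} (h : FR G u v) : G.Reaches u v :=
  Relation.ReflTransGen.mono (fun _ _ h => h.1) _ _ h

/-- the set of `Π`-vertices feeding the full zone above `t`. -/
def Bset (t : G.V) : Set G.V :=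
  {b | b ∈ G.bigPi ∧ ∃ f, G.Adj b f ∧ f ∉ G.bigPi ∧ FR G f t}

lemma fullpath {u v : G.V} (hu : u ∉ G.bigPi) (huv : G.Reaches u v) :
    FR G u v := by
  induction huv using Relation.ReflTransGen.head_induction_on with
  | refl => exact Relation.ReflTransGen.refl
  | @head a c h hcb ih =>
    have hc : c ∉ G.bigPi := notPi_reaches G hu (Relation.ReflTransGen.single h)
    exact Relation.ReflTransGen.head ⟨h, hu, hc⟩ (ih hc)

/-- coverage: each source reaches `t` through some last `Π`-vertex. -/
lemma coverage {t : G.V} (ht : t ∉ G.bigPi) (i : Fin 3) :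
    ∃ b, b ∈ Bset G t ∧ G.Reaches (G.S i) b := by
  have hreach : G.Reaches (G.S i) t := (notPi_iff G).mp ht i
  have key : ∀ u, G.Reaches u t → u ∈ G.bigPi →
      ∃ b, b ∈ Bset G t ∧ G.Reaches u b := by
    intro u hu
    induction hu using Relation.ReflTransGen.head_induction_on with
    | refl => intro h; exact absurd h ht
    | @head a c h hcb ih =>
      intro ha
      by_cases hc : c ∈ G.bigPi
      · rcases ih hc with ⟨b, hb, hcb'⟩
        exact ⟨b, hb, Relation.ReflTransGen.head h hcb'⟩
      · exact ⟨a, ⟨ha, c, h, hc, fullpath G hc hcb⟩, Relation.ReflTransGen.refl⟩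
  exact key (G.S i) hreach (S_mem_bigPi G i)

end Cover

section BaseAssign

open Classical

variable {n : ℕ} (G : RegionGraph n)

/-- classification of vertices into sources / pair regions (garbage on full
vertices). -/
noncomputable def classOf (v : G.V) : Class :=
  if v = G.S 0 then .inl 0
  else if v = G.S 1 then .inl 1
  else if v = G.S 2 then .inl 2
  else if ¬ G.Reaches (G.S 2) v then .inr 0
  else if ¬ G.Reaches (G.S 1) v then .inr 1
  else .inr 2

/-- the base assignment determined by a choice `g` of region vectors. -/
noncomputable def d0 (g : Fin 3 → Vec3) : G.V → Vec3 := fun v => val g (classOf G v)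

lemma classOf_S (i : Fin 3) : classOf G (G.S i) = .inl i := by
  have hne : ∀ a b : Fin 3, a ≠ b → G.S a ≠ G.S b := fun a b hab h => hab (G.S_inj h)
  fin_cases i
  · show classOf G (G.S 0) = Sum.inl 0
    unfold classOf
    rw [if_pos rfl]
  · show classOf G (G.S 1) = Sum.inl 1
    unfold classOf
    rw [if_neg (hne 1 0 (by decide)), if_pos rfl]
  · show classOf G (G.S 2) = Sum.inl 2
    unfold classOf
    rw [if_neg (hne 2 0 (by decide)), if_neg (hne 2 1 (by decide)), if_pos rfl]

lemma d0_S (g : Fin 3 → Vec3) (i : Fin 3) :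
    d0 G g (G.S i) = Pi.single i 1 := by
  unfold d0
  rw [classOf_S]
  funext j
  simp [val, Pi.single_apply]

/-- the classification of a `Π`-vertex respects which sources reach it. -/
lemma okClass {b : G.V} (hb : b ∈ G.bigPi) {i : Fin 3}
    (hr : G.Reaches (G.S i) b) : ok i (classOf G b) := by
  unfold classOf
  by_cases h0 : b = G.S 0
  · subst h0
    have := G.S_inj (reaches_src G hr)
    rw [if_pos rfl]
    simp [ok, okB, this]
  · rw [if_neg h0]
    by_cases h1 : b = G.S 1
    · subst h1
      have := G.S_inj (reaches_src G hr)
      rw [if_pos rfl]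
      simp [ok, okB, this]
    · rw [if_neg h1]
      by_cases h2 : b = G.S 2
      · subst h2
        have := G.S_inj (reaches_src G hr)
        rw [if_pos rfl]
        simp [ok, okB, this]
      · rw [if_neg h2]
        by_cases hr2 : ¬ G.Reaches (G.S 2) b
        · rw [if_pos hr2]
          have : i ≠ 2 := by rintro rfl; exact hr2 hr
          simp [ok, okB, cmpl]; exact (@decide_eq_true_iff _ _).mpr this
        · rw [if_neg hr2]
          push_neg at hr2
          by_cases hr1 : ¬ G.Reaches (G.S 1) b
          · rw [if_pos hr1]
            have : i ≠ 1 := by rintro rfl; exact hr1 hr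
            simp [ok, okB, cmpl]; exact (@decide_eq_true_iff _ _).mpr this
          · rw [if_neg hr1]
            push_neg at hr1
            have : i ≠ 0 := by
              rintro rfl
              refine ((notPi_iff G).mpr (fun k => ?_)) hb
              fin_cases k
              · exact hr
              · exact hr1
              · exact hr2
            simp [ok, okB, cmpl]; exact (@decide_eq_true_iff _ _).mpr this

/-- non-source `Π`-vertices fall in one of three reachability patterns. -/
lemma pi_pattern {v : G.V} (hv : v ∈ G.bigPi) (hns : ∀ i : Fin 3, v ≠ G.S i) :
    (G.Reaches (G.S 0) v ∧ G.Reaches (G.S 1) v ∧ ¬ G.Reaches (G.S 2) v) ∨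
    (G.Reaches (G.S 0) v ∧ ¬ G.Reaches (G.S 1) v ∧ G.Reaches (G.S 2) v) ∨
    (¬ G.Reaches (G.S 0) v ∧ G.Reaches (G.S 1) v ∧ G.Reaches (G.S 2) v) := by
  rcases two_srcs G hns with ⟨k, l, hkl, hk, hl⟩
  have pat : ∀ i j : Fin 3, v ∈ G.regPair i j → ∀ m, G.Reaches (G.S m) v →
      m = i ∨ m = j := fun i j h m hm => reach_of_regPair G h hm
  rcases hv with (hv | hv) | hv
  · refine Or.inl ⟨?_, ?_, ?_⟩
    · have hk' := pat 0 1 hv k hk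
      have hl' := pat 0 1 hv l hl
      rcases hk' with rfl | rfl
      · exact hk
      · rcases hl' with rfl | rfl
        · exact hl
        · exact absurd rfl hkl
    · have hk' := pat 0 1 hv k hk
      have hl' := pat 0 1 hv l hl
      rcases hk' with rfl | rfl
      · rcases hl' with rfl | rfl
        · exact absurd rfl hkl
        · exact hl
      · exact hk
    · intro h2
      rcases pat 0 1 hv 2 h2 with h | h <;> exact absurd h (by decide)
  · refine Or.inr (Or.inl ⟨?_, ?_, ?_⟩)
    · have hk' := pat 0 2 hv k hk
      have hl' := pat 0 2 hv l hl
      rcases hk' with rfl | rfl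
      · exact hk
      · rcases hl' with rfl | rfl
        · exact hl
        · exact absurd rfl hkl
    · intro h1
      rcases pat 0 2 hv 1 h1 with h | h <;> exact absurd h (by decide)
    · have hk' := pat 0 2 hv k hk
      have hl' := pat 0 2 hv l hl
      rcases hk' with rfl | rfl
      · rcases hl' with rfl | rfl
        · exact absurd rfl hkl
        · exact hl
      · exact hk
  · refine Or.inr (Or.inr ⟨?_, ?_, ?_⟩)
    · intro h0
      rcases pat 1 2 hv 0 h0 with h | h <;> exact absurd h (by decide)
    · have hk' := pat 1 2 hv k hk
      have hl' := pat 1 2 hv l hl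
      rcases hk' with rfl | rfl
      · exact hk
      · rcases hl' with rfl | rfl
        · exact hl
        · exact absurd rfl hkl
    · have hk' := pat 1 2 hv k hk
      have hl' := pat 1 2 hv l hl
      rcases hk' with rfl | rfl
      · rcases hl' with rfl | rfl
        · exact absurd rfl hkl
        · exact hl
      · exact hk

end BaseAssign
section Ext

open Classical

variable {n : ℕ} (G : RegionGraph n)

/-- successor function toward the target `t` through full vertices. -/
noncomputable def sig (t : G.V) : G.V → G.V := fun v =>
  if h : v ≠ t ∧ ∃ v', Fadj G v v' ∧ FR G v' t then h.2.choose else v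

lemma sig_t (t : G.V) : sig G t t = t := dif_neg (by simp)

lemma sig_spec {t v : G.V} (hv : v ≠ t) (hfr : FR G v t) :
    Fadj G v (sig G t v) ∧ FR G (sig G t v) t := by
  rcases Relation.ReflTransGen.cases_head hfr with h | ⟨w', hw1, hw2⟩
  · exact absurd h hv
  · have hcond : v ≠ t ∧ ∃ v', Fadj G v v' ∧ FR G v' t := ⟨hv, w', hw1, hw2⟩
    unfold sig
    rw [dif_pos hcond]
    exact hcond.2.choose_spec

lemma sig_cases (t v : G.V) :
    sig G t v = v ∨
    (G.Adj v (sig G t v) ∧ v ∉ G.bigPi ∧ sig G t v ∉ G.bigPi ∧ FR G (sig G t v) t) := by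
  unfold sig
  split_ifs with h
  · rcases h.2.choose_spec with ⟨⟨ha, hb, hc⟩, hd⟩
    exact Or.inr ⟨ha, hb, hc, hd⟩
  · exact Or.inl rfl

lemma sig_fix_iter {t u : G.V} (h : sig G t u = u) :
    ∀ k, (sig G t)^[k] u = u := by
  intro k
  induction k with
  | zero => rfl
  | succ k ih => rw [Function.iterate_succ_apply, h, ih]

lemma sig_reach {t : G.V} :
    ∀ (k : ℕ) (u v : G.V), (sig G t)^[k] u = v →
      u = v ∨ Relation.TransGen G.Adj u v := by
  intro k
  induction k with
  | zero => exact fun u v h => Or.inl h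
  | succ k ih =>
    intro u v h
    rw [Function.iterate_succ_apply] at h
    rcases sig_cases G t u with he | hadj
    · rw [he] at h
      exact ih u v h
    · rcases ih _ _ h with he2 | htr
      · exact Or.inr (he2 ▸ Relation.TransGen.single hadj.1)
      · exact Or.inr (Relation.TransGen.head hadj.1 htr)

lemma sig_reach' {t : G.V} (k : ℕ) (hk : k ≠ 0) (u v : G.V)
    (h : (sig G t)^[k] u = v) :
    (sig G t u = u ∧ u = v) ∨ Relation.TransGen G.Adj u v := by
  cases k with
  | zero => exact absurd rfl hk
  | succ k =>
    rw [Function.iterate_succ_apply] at h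
    rcases sig_cases G t u with he | hadj
    · rw [he] at h
      rw [sig_fix_iter G he] at h
      exact Or.inl ⟨he, h⟩
    · rcases sig_reach G k _ _ h with he2 | htr
      · exact Or.inr (he2 ▸ Relation.TransGen.single hadj.1)
      · exact Or.inr (Relation.TransGen.head hadj.1 htr)

lemma sig_term {t : G.V} : ∀ v, FR G v t → ∃ k, (sig G t)^[k] v = t := by
  intro v
  induction v using (wf_down G).induction with
  | _ v ih =>
    intro hfr
    by_cases hv : v = t
    · exact ⟨0, hv⟩
    · have hs := sig_spec G hv hfr
      rcases ih (sig G t v) hs.1.1 hs.2 with ⟨k, hk⟩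
      exact ⟨k + 1, by rw [Function.iterate_succ_apply]; exact hk⟩

lemma sig_orbit_inv {t : G.V} :
    ∀ (k : ℕ) (v : G.V), FR G v t → v ∉ G.bigPi →
      (sig G t)^[k] v ∉ G.bigPi ∧ FR G ((sig G t)^[k] v) t := by
  intro k
  induction k with
  | zero => exact fun v h hv => ⟨hv, h⟩
  | succ k ih =>
    intro v hfr hv
    rw [Function.iterate_succ_apply]
    by_cases hvt : v = t
    · subst hvt
      rw [sig_t]
      exact ih _ hfr hv
    · have hs := sig_spec G hvt hfr
      exact ih _ hs.2 hs.1.2.2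

/-- The extension lemma: any element of the span of the values on `Bset t`
can be realized at the full vertex `t` by a code that is valid on the full
zone, extends `d0'`, and vanishes on full vertices not reaching `t`. -/
lemma ext_lemma (d0' : G.V → Vec3) {t : G.V} (ht : t ∉ G.bigPi) {w : Vec3}
    (hw : w ∈ Submodule.span Fq (d0' '' Bset G t)) :
    ∃ d : G.V → Vec3,
      (∀ v, v ∈ G.bigPi → d v = d0' v) ∧
      (∀ v, v ∉ G.bigPi → d v ∈ Submodule.span Fq (d '' {p | G.Adj p v})) ∧
      d t = w ∧
      (∀ v, v ∉ G.bigPi → ¬ G.Reaches v t → d v = 0) := by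
  classical
  letI := G.fintypeV
  obtain ⟨N, coef, vecs, hsum⟩ := Submodule.mem_span_set'.mp hw
  have hmem : ∀ i : Fin N, ∃ b, b ∈ Bset G t ∧ d0' b = (vecs i : Vec3) := by
    intro i
    rcases (vecs i).2 with ⟨b, hb, hval⟩
    exact ⟨b, hb, hval⟩
  choose b hbB hbval using hmem
  have hfc : ∀ i : Fin N, ∃ f, G.Adj (b i) f ∧ f ∉ G.bigPi ∧ FR G f t :=
    fun i => (hbB i).2
  choose fc hfc1 hfc2 hfc3 using hfc
  set vcs : Fin N → Vec3 := fun i => (vecs i : Vec3) with hvcs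
  -- the extended assignment
  set Sv : G.V → Finset (Fin N) :=
    fun v => Finset.univ.filter (fun i => ∃ k, (sig G t)^[k] (fc i) = v) with hSv
  set d : G.V → Vec3 :=
    fun v => if v ∈ G.bigPi then d0' v else ∑ i ∈ Sv v, coef i • vcs i with hd
  have dPi : ∀ v, v ∈ G.bigPi → d v = d0' v := by
    intro v hv
    simp only [hd, if_pos hv]
  have dFull : ∀ v, v ∉ G.bigPi → d v = ∑ i ∈ Sv v, coef i • vcs i := by
    intro v hv
    simp only [hd, if_neg hv]
  -- no index can pass through two distinct `sig`-predecessors of `v`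
  have noclash : ∀ (i : Fin N) (p p' v : G.V), sig G t p = v → p ≠ v →
      sig G t p' = v → p' ≠ v → ∀ m m', (sig G t)^[m] (fc i) = p →
      (sig G t)^[m'] (fc i) = p' → m < m' → False := by
    intro i p p' v hp hpv hp'2 hp'v m m' hm hm' hlt
    have hadj : G.Adj p' v := by
      rcases sig_cases G t p' with he2 | hr
      · exact absurd (he2.symm.trans hp'2) hp'v
      · rw [hp'2] at hr
        exact hr.1
    have hv' : (sig G t)^[m + 1] (fc i) = v := by
      rw [Function.iterate_succ_apply', hm, hp]
    rcases Nat.lt_or_ge m' (m + 2) with hcase | hcase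
    · have : m' = m + 1 := by omega
      subst this
      rw [hm'] at hv'
      exact hp'v hv'
    · have he : m' = (m' - (m + 1)) + (m + 1) := by omega
      have hiter : (sig G t)^[m' - (m + 1)] v = p' := by
        rw [← hv', ← Function.iterate_add_apply, ← he, hm']
      rcases sig_reach' G (m' - (m + 1)) (by omega) v p' hiter with ⟨_, hvp⟩ | htr
      · exact hp'v hvp.symm
      · exact G.acyclic v (htr.trans (Relation.TransGen.single hadj))
  -- entry set and predecessor set of `v`
  set Ev : G.V → Finset (Fin N) :=
    fun v => Finset.univ.filter (fun i => fc i = v) with hEv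
  set Pv : G.V → Finset G.V :=
    fun v => Finset.univ.filter (fun p => sig G t p = v ∧ p ≠ v) with hPv
  have partition : ∀ v, Sv v = Ev v ∪ (Pv v).biUnion (fun p => Sv p) := by
    intro v
    ext i
    simp only [hSv, hEv, hPv, Finset.mem_union, Finset.mem_biUnion, Finset.mem_filter,
      Finset.mem_univ, true_and]
    constructor
    · rintro ⟨k, hk⟩
      have hex : ∃ k, (sig G t)^[k] (fc i) = v := ⟨k, hk⟩
      set k0 := Nat.find hex with hk0
      have hk0spec : (sig G t)^[k0] (fc i) = v := Nat.find_spec hex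
      cases hc : k0 with
      | zero =>
        rw [hc] at hk0spec
        exact Or.inl hk0spec
      | succ m =>
        right
        refine ⟨(sig G t)^[m] (fc i), ⟨?_, ?_⟩, ⟨m, rfl⟩⟩
        · have h2 := hk0spec
          rw [hc, Function.iterate_succ_apply'] at h2
          exact h2
        · intro hcon
          have := Nat.find_min hex (by omega : m < k0) hcon
          exact this
    · rintro (h | ⟨p, ⟨hp1, hp2⟩, ⟨m, hm⟩⟩)
      · exact ⟨0, h⟩
      · exact ⟨m + 1, by rw [Function.iterate_succ_apply', hm]; exact hp1⟩
  have disj1 : ∀ v, Disjoint (Ev v) ((Pv v).biUnion (fun p => Sv p)) := by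
    intro v
    rw [Finset.disjoint_left]
    intro i hiE hiB
    simp only [hEv, hPv, hSv, Finset.mem_filter, Finset.mem_univ, true_and,
      Finset.mem_biUnion] at hiE hiB
    rcases hiB with ⟨p, ⟨hp1, hp2⟩, ⟨m, hm⟩⟩
    rcases Nat.eq_zero_or_pos m with rfl | hmpos
    · exact hp2 (hm.symm.trans hiE)
    · have hiter : (sig G t)^[m] v = p := by rw [← hiE]; exact hm
      rcases sig_reach' G m (by omega) v p hiter with ⟨_, hvp⟩ | htr
      · exact hp2 hvp.symm
      · have hadj : G.Adj p v := by
          rcases sig_cases G t p with he2 | hr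
          · exact absurd (he2.symm.trans hp1) hp2
          · rw [hp1] at hr
            exact hr.1
        exact G.acyclic v (htr.trans (Relation.TransGen.single hadj))
  have disj2 : ∀ v, (↑(Pv v) : Set G.V).PairwiseDisjoint (fun p => Sv p) := by
    intro v p hp p' hp' hne
    simp only [hPv, Finset.coe_filter, Set.mem_setOf_eq, Finset.mem_univ,
      true_and] at hp hp'
    rw [Function.onFun, Finset.disjoint_left]
    intro i hip hip'
    simp only [hSv, Finset.mem_filter, Finset.mem_univ, true_and] at hip hip'
    rcases hip with ⟨m, hm⟩
    rcases hip' with ⟨m', hm'⟩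
    rcases lt_trichotomy m m' with hlt | heq | hgt
    · exact noclash i p p' v hp.1 hp.2 hp'.1 hp'.2 m m' hm hm' hlt
    · subst heq
      exact hne (hm.symm.trans hm')
    · exact noclash i p' p v hp'.1 hp'.2 hp.1 hp.2 m' m hm' hm hgt
  -- d at a full vertex decomposes along parents
  have dDecomp : ∀ v, v ∉ G.bigPi →
      d v = (∑ i ∈ Ev v, coef i • vcs i) + ∑ p ∈ Pv v, d p := by
    intro v hv
    rw [dFull v hv, partition v, Finset.sum_union (disj1 v),
      Finset.sum_biUnion (disj2 v)]
    congr 1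
    refine Finset.sum_congr rfl (fun p hp => ?_)
    simp only [hPv, Finset.mem_filter, Finset.mem_univ, true_and] at hp
    have hpfull : p ∉ G.bigPi := by
      rcases sig_cases G t p with he2 | hr
      · exact absurd (he2.symm.trans hp.1) hp.2
      · exact hr.2.1
    rw [dFull p hpfull]
  refine ⟨d, dPi, ?_, ?_, ?_⟩
  · -- validity on full vertices
    intro v hv
    rw [dDecomp v hv]
    refine Submodule.add_mem _ (Submodule.sum_mem _ (fun i hi => ?_))
      (Submodule.sum_mem _ (fun p hp => ?_))
    · simp only [hEv, Finset.mem_filter, Finset.mem_univ, true_and] at hi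
      have hbv : d (b i) = vcs i := by
        rw [dPi (b i) (hbB i).1, hbval i]
      rw [← hbv]
      refine Submodule.smul_mem _ _ (Submodule.subset_span ?_)
      exact ⟨b i, by rw [← hi] at hv ⊢; exact hfc1 i, rfl⟩
    · simp only [hPv, Finset.mem_filter, Finset.mem_univ, true_and] at hp
      have hadj : G.Adj p v := by
        rcases sig_cases G t p with he2 | hr
        · exact absurd (he2.symm.trans hp.1) hp.2
        · rw [hp.1] at hr
          exact hr.1
      exact Submodule.subset_span ⟨p, hadj, rfl⟩
  · -- value at the target
    have hSt : Sv t = Finset.univ := by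
      rw [Finset.eq_univ_iff_forall]
      intro i
      simp only [hSv, Finset.mem_filter, Finset.mem_univ, true_and]
      exact sig_term G (fc i) (hfc3 i)
    rw [dFull t ht, hSt, ← hsum]
  · -- vanishing away from the target
    intro v hv hnr
    rw [dFull v hv]
    have : Sv v = ∅ := by
      rw [Finset.eq_empty_iff_forall_notMem]
      intro i hi
      simp only [hSv, Finset.mem_filter, Finset.mem_univ, true_and] at hi
      rcases hi with ⟨k, hk⟩
      have := sig_orbit_inv G k (fc i) (hfc3 i) (hfc2 i)
      rw [hk] at this
      exact hnr (FR_reaches G this.2)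
    rw [this, Finset.sum_empty]

end Ext
section Valid

open Classical

variable {n : ℕ} (G : RegionGraph n)

/-- the base assignment is a valid partial code on `Π`. -/
lemma d0_valid (g : Fin 3 → Vec3) (hg0 : g 0 2 = 0) (hg1 : g 1 1 = 0)
    (hg2 : g 2 0 = 0) {v : G.V} (hv : v ∈ G.bigPi)
    (hns : ∀ i : Fin 3, v ≠ G.S i) :
    d0 G g v ∈ Submodule.span Fq (d0 G g '' {p | G.Adj p v}) := by
  have mem_par : ∀ u, G.Adj u v → d0 G g u ∈ d0 G g '' {p | G.Adj p v} :=
    fun u hu => ⟨u, hu, rfl⟩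
  rcases pi_pattern G hv hns with ⟨h0, h1, h2⟩ | ⟨h0, h1, h2⟩ | ⟨h0, h1, h2⟩
  -- pattern {0,1}
  · have hclass : classOf G v = .inr 0 := by
      unfold classOf
      rw [if_neg (hns 0), if_neg (hns 1), if_neg (hns 2), if_pos h2]
    have hreg : v ∈ G.regPair 0 1 := by
      refine regPair_of_reach G (fun k hk => ?_)
      fin_cases k
      · exact Or.inl rfl
      · exact Or.inr rfl
      · exact absurd hk h2
    by_cases hp : ∃ u, G.Adj u v ∧ ∀ i : Fin 3, u ≠ G.S i
    · rcases hp with ⟨u, hu, hus⟩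
      have hureg : u ∈ G.regPair 0 1 := regPair_parent G hreg hu
      have hu2 : ¬ G.Reaches (G.S 2) u := by
        intro hr
        rcases reach_of_regPair G hureg hr with h | h <;> exact absurd h (by decide)
      have huclass : classOf G u = .inr 0 := by
        unfold classOf
        rw [if_neg (hus 0), if_neg (hus 1), if_neg (hus 2), if_pos hu2]
      have : d0 G g v = d0 G g u := by
        unfold d0
        rw [hclass, huclass]
      rw [this]
      exact Submodule.subset_span (mem_par u hu)
    · push_neg at hp
      rcases G.two_parents v hns with ⟨p, q, hpq, hpv, hqv⟩
      rcases hp p hpv with ⟨a, rfl⟩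
      rcases hp q hqv with ⟨c, rfl⟩
      have ha : a = 0 ∨ a = 1 := src_mem_regPair G (regPair_parent G hreg hpv)
      have hc : c = 0 ∨ c = 1 := src_mem_regPair G (regPair_parent G hreg hqv)
      have hac : a ≠ c := fun h => hpq (by rw [h])
      have hadj0 : G.Adj (G.S 0) v ∧ G.Adj (G.S 1) v := by
        rcases ha with rfl | rfl <;> rcases hc with rfl | rfl <;>
          first
            | exact absurd rfl hac
            | exact ⟨hpv, hqv⟩
            | exact ⟨hqv, hpv⟩
      have hexp : d0 G g v =
          (g 0 0) • d0 G g (G.S 0) + (g 0 1) • d0 G g (G.S 1) := by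
        rw [d0_S, d0_S]
        show val g (classOf G v) = _
        rw [hclass]
        funext j
        fin_cases j <;>
          simp [val, Pi.single_apply, hg0]
      rw [hexp]
      exact Submodule.add_mem _
        (Submodule.smul_mem _ _ (Submodule.subset_span (mem_par _ hadj0.1)))
        (Submodule.smul_mem _ _ (Submodule.subset_span (mem_par _ hadj0.2)))
  -- pattern {0,2}
  · have hclass : classOf G v = .inr 1 := by
      unfold classOf
      rw [if_neg (hns 0), if_neg (hns 1), if_neg (hns 2),
        if_neg (not_not_intro h2), if_pos h1]
    have hreg : v ∈ G.regPair 0 2 := by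
      refine regPair_of_reach G (fun k hk => ?_)
      fin_cases k
      · exact Or.inl rfl
      · exact absurd hk h1
      · exact Or.inr rfl
    by_cases hp : ∃ u, G.Adj u v ∧ ∀ i : Fin 3, u ≠ G.S i
    · rcases hp with ⟨u, hu, hus⟩
      have hureg : u ∈ G.regPair 0 2 := regPair_parent G hreg hu
      have hu1 : ¬ G.Reaches (G.S 1) u := by
        intro hr
        rcases reach_of_regPair G hureg hr with h | h <;> exact absurd h (by decide)
      have hu2 : G.Reaches (G.S 2) u := by
        rcases two_srcs G hus with ⟨k, l, hkl, hk, hl⟩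
        have hk' := reach_of_regPair G hureg hk
        have hl' := reach_of_regPair G hureg hl
        rcases hk' with rfl | rfl
        · rcases hl' with rfl | rfl
          · exact absurd rfl hkl
          · exact hl
        · exact hk
      have huclass : classOf G u = .inr 1 := by
        unfold classOf
        rw [if_neg (hus 0), if_neg (hus 1), if_neg (hus 2),
          if_neg (not_not_intro hu2), if_pos hu1]
      have : d0 G g v = d0 G g u := by
        unfold d0
        rw [hclass, huclass]
      rw [this]
      exact Submodule.subset_span (mem_par u hu)
    · push_neg at hp
      rcases G.two_parents v hns with ⟨p, q, hpq, hpv, hqv⟩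
      rcases hp p hpv with ⟨a, rfl⟩
      rcases hp q hqv with ⟨c, rfl⟩
      have ha : a = 0 ∨ a = 2 := src_mem_regPair G (regPair_parent G hreg hpv)
      have hc : c = 0 ∨ c = 2 := src_mem_regPair G (regPair_parent G hreg hqv)
      have hac : a ≠ c := fun h => hpq (by rw [h])
      have hadj0 : G.Adj (G.S 0) v ∧ G.Adj (G.S 2) v := by
        rcases ha with rfl | rfl <;> rcases hc with rfl | rfl <;>
          first
            | exact absurd rfl hac
            | exact ⟨hpv, hqv⟩
            | exact ⟨hqv, hpv⟩
      have hexp : d0 G g v =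
          (g 1 0) • d0 G g (G.S 0) + (g 1 2) • d0 G g (G.S 2) := by
        rw [d0_S, d0_S]
        show val g (classOf G v) = _
        rw [hclass]
        funext j
        fin_cases j <;>
          simp [val, Pi.single_apply, hg1]
      rw [hexp]
      exact Submodule.add_mem _
        (Submodule.smul_mem _ _ (Submodule.subset_span (mem_par _ hadj0.1)))
        (Submodule.smul_mem _ _ (Submodule.subset_span (mem_par _ hadj0.2)))
  -- pattern {1,2}
  · have hclass : classOf G v = .inr 2 := by
      unfold classOf
      rw [if_neg (hns 0), if_neg (hns 1), if_neg (hns 2),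
        if_neg (not_not_intro h2), if_neg (not_not_intro h1)]
    have hreg : v ∈ G.regPair 1 2 := by
      refine regPair_of_reach G (fun k hk => ?_)
      fin_cases k
      · exact absurd hk h0
      · exact Or.inl rfl
      · exact Or.inr rfl
    by_cases hp : ∃ u, G.Adj u v ∧ ∀ i : Fin 3, u ≠ G.S i
    · rcases hp with ⟨u, hu, hus⟩
      have hureg : u ∈ G.regPair 1 2 := regPair_parent G hreg hu
      have hu1 : G.Reaches (G.S 1) u ∧ G.Reaches (G.S 2) u := by
        rcases two_srcs G hus with ⟨k, l, hkl, hk, hl⟩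
        have hk' := reach_of_regPair G hureg hk
        have hl' := reach_of_regPair G hureg hl
        rcases hk' with rfl | rfl
        · rcases hl' with rfl | rfl
          · exact absurd rfl hkl
          · exact ⟨hk, hl⟩
        · rcases hl' with rfl | rfl
          · exact ⟨hl, hk⟩
          · exact absurd rfl hkl
      have huclass : classOf G u = .inr 2 := by
        unfold classOf
        rw [if_neg (hus 0), if_neg (hus 1), if_neg (hus 2),
          if_neg (not_not_intro hu1.2), if_neg (not_not_intro hu1.1)]
      have : d0 G g v = d0 G g u := by
        unfold d0
        rw [hclass, huclass]
      rw [this]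
      exact Submodule.subset_span (mem_par u hu)
    · push_neg at hp
      rcases G.two_parents v hns with ⟨p, q, hpq, hpv, hqv⟩
      rcases hp p hpv with ⟨a, rfl⟩
      rcases hp q hqv with ⟨c, rfl⟩
      have ha : a = 1 ∨ a = 2 := src_mem_regPair G (regPair_parent G hreg hpv)
      have hc : c = 1 ∨ c = 2 := src_mem_regPair G (regPair_parent G hreg hqv)
      have hac : a ≠ c := fun h => hpq (by rw [h])
      have hadj0 : G.Adj (G.S 1) v ∧ G.Adj (G.S 2) v := by
        rcases ha with rfl | rfl <;> rcases hc with rfl | rfl <;>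
          first
            | exact absurd rfl hac
            | exact ⟨hpv, hqv⟩
            | exact ⟨hqv, hpv⟩
      have hexp : d0 G g v =
          (g 2 1) • d0 G g (G.S 1) + (g 2 2) • d0 G g (G.S 2) := by
        rw [d0_S, d0_S]
        show val g (classOf G v) = _
        rw [hclass]
        funext j
        fin_cases j <;>
          simp [val, Pi.single_apply, hg2]
      rw [hexp]
      exact Submodule.add_mem _
        (Submodule.smul_mem _ _ (Submodule.subset_span (mem_par _ hadj0.1)))
        (Submodule.smul_mem _ _ (Submodule.subset_span (mem_par _ hadj0.2)))

end Valid
section Assemble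

open Classical

variable {n : ℕ} (G : RegionGraph n)

/-- covering classes above a full vertex. -/
lemma terminal_classes {t : G.V} (ht : t ∉ G.bigPi) :
    ∃ c : Fin 3 → Class, (∀ i, ok i (c i)) ∧
      ∀ (g : Fin 3 → Vec3) (i : Fin 3), val g (c i) ∈ d0 G g '' Bset G t := by
  choose bf hbB hbR using coverage G ht
  exact ⟨fun i => classOf G (bf i), fun i => okClass G (hbB i).1 (hbR i),
    fun g i => ⟨bf i, hbB i, rfl⟩⟩

lemma cond_to_span {t : G.V} {c : Fin 3 → Class} (hok : ∀ i, ok i (c i))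
    (hmem : ∀ (g : Fin 3 → Vec3) (i : Fin 3), val g (c i) ∈ d0 G g '' Bset G t)
    (g : Fin 3 → Vec3) (hcond : condD (minrep c) g) :
    (fun _ => (1 : Fq)) ∈ Submodule.span Fq (d0 G g '' Bset G t) := by
  rcases hcond with ⟨a, ha⟩
  rw [← ha]
  have key : ∀ j : Fin 3, val g (classesOf (minrep c) j) ∈
      Submodule.span Fq (d0 G g '' Bset G t) := by
    intro j
    rcases minsub c hok j with h | h | h <;> rw [h] <;>
      exact Submodule.subset_span (hmem g _)
  exact Submodule.add_mem _
    (Submodule.add_mem _ (Submodule.smul_mem _ _ (key 0))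
      (Submodule.smul_mem _ _ (key 1)))
    (Submodule.smul_mem _ _ (key 2))

lemma reaches_adj_acyclic {z p : G.V} (h1 : G.Reaches z p) (h2 : G.Adj p z) :
    False :=
  G.acyclic z (Relation.TransGen.tail' h1 h2)

end Assemble

end TwoTerm

open TwoTerm

/-- A region graph with exactly two terminal vertices satisfying Assumption 1
is feasible. -/
theorem two_terminal_feasible (G : RegionGraph 2) (hA : G.Assumption1) :
    G.Feasible := by
  classical
  haveI : Fact (Nat.Prime 5) := ⟨by norm_num⟩
  by_cases hC : ∃ z, z ∉ G.bigPi ∧ G.Reaches z (G.T 0) ∧ G.Reaches z (G.T 1)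
  · -- a common full vertex above both terminals
    obtain ⟨z, hz, hz0, hz1⟩ := hC
    obtain ⟨c, hok, hmem⟩ := terminal_classes G hz
    obtain ⟨hg0, hg1, hg2⟩ := witplane (minrep c) (minrep c)
    have hspan := cond_to_span G hok hmem (wit (minrep c) (minrep c))
      (solve (minrep c) (minrep c)).1
    set g := wit (minrep c) (minrep c) with hgdef
    obtain ⟨d, hdPi, hdValid, hdt, _⟩ := ext_lemma G (d0 G g) hz hspan
    refine ⟨Fq, inferInstance, inferInstance,
      fun v => if G.Reaches z v then (fun _ => 1) else d v, ⟨?_, ?_⟩, ?_⟩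
    · intro i
      have hSPi := S_mem_bigPi G i
      have hnr : ¬ G.Reaches z (G.S i) := fun h => (notPi_reaches G hz h) hSPi
      simp only [if_neg hnr]
      rw [hdPi _ hSPi, d0_S]
    · intro v hns
      by_cases hvz : G.Reaches z v
      · by_cases hveq : v = z
        · subst hveq
          have himg : (fun u => if G.Reaches v u then (fun _ => (1:Fq)) else d u) ''
              {p | G.Adj p v} = d '' {p | G.Adj p v} := by
            refine Set.image_congr (fun p hp => ?_)
            have : ¬ G.Reaches v p := fun h => reaches_adj_acyclic G h hp
            simp only [if_neg this]
          have hmem2 := hdValid v hz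
          rw [hdt] at hmem2
          rw [himg]
          simpa only [if_pos hvz] using hmem2
        · rcases Relation.ReflTransGen.cases_tail hvz with h | ⟨u, hzu, hu⟩
          · exact absurd h hveq
          · simp only [if_pos hvz]
            exact Submodule.subset_span ⟨u, hu, if_pos hzu⟩
      · have hpar : ∀ p, G.Adj p v → ¬ G.Reaches z p :=
          fun p hp h => hvz (h.tail hp)
        have himg : (fun u => if G.Reaches z u then (fun _ => (1:Fq)) else d u) ''
            {p | G.Adj p v} = d '' {p | G.Adj p v} := by
          refine Set.image_congr (fun p hp => ?_)
          simp only [if_neg (hpar p hp)]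
        simp only [if_neg hvz, himg]
        by_cases hvPi : v ∈ G.bigPi
        · have himg2 : d '' {p | G.Adj p v} = d0 G g '' {p | G.Adj p v} := by
            refine Set.image_congr (fun p hp => ?_)
            exact hdPi p (bigPi_parent G hvPi hp)
          rw [hdPi v hvPi, himg2]
          exact d0_valid G g hg0 hg1 hg2 hvPi hns
        · exact hdValid v hvPi
    · intro j
      fin_cases j
      · exact if_pos hz0
      · exact if_pos hz1
  · -- disjoint full zones above the two terminals
    have hT0 := hA 0
    have hT1 := hA 1
    obtain ⟨c0, hok0, hmem0⟩ := terminal_classes G hT0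
    obtain ⟨c1, hok1, hmem1⟩ := terminal_classes G hT1
    obtain ⟨hg0, hg1, hg2⟩ := witplane (minrep c0) (minrep c1)
    have hspan0 := cond_to_span G hok0 hmem0 (wit (minrep c0) (minrep c1))
      (solve (minrep c0) (minrep c1)).1
    have hspan1 := cond_to_span G hok1 hmem1 (wit (minrep c0) (minrep c1))
      (solve (minrep c0) (minrep c1)).2
    set g := wit (minrep c0) (minrep c1) with hgdef
    obtain ⟨dA, hAPi, hAValid, hAt, hAvan⟩ := ext_lemma G (d0 G g) hT0 hspan0
    obtain ⟨dB, hBPi, hBValid, hBt, hBvan⟩ := ext_lemma G (d0 G g) hT1 hspan1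
    have hnotboth : ∀ v, v ∉ G.bigPi →
        ¬ (G.Reaches v (G.T 0) ∧ G.Reaches v (G.T 1)) :=
      fun v hv h => hC ⟨v, hv, h.1, h.2⟩
    refine ⟨Fq, inferInstance, inferInstance,
      fun v => if v ∈ G.bigPi then d0 G g v else dA v + dB v, ⟨?_, ?_⟩, ?_⟩
    · intro i
      simp only [if_pos (S_mem_bigPi G i)]
      exact d0_S G g i
    · intro v hns
      by_cases hvPi : v ∈ G.bigPi
      · have himg : (fun u => if u ∈ G.bigPi then d0 G g u else dA u + dB u) ''
            {p | G.Adj p v} = d0 G g '' {p | G.Adj p v} := by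
          refine Set.image_congr (fun p hp => ?_)
          simp only [if_pos (bigPi_parent G hvPi hp)]
        simp only [if_pos hvPi, himg]
        exact d0_valid G g hg0 hg1 hg2 hvPi hns
      · simp only [if_neg hvPi]
        by_cases hr0 : G.Reaches v (G.T 0)
        · have hnr1 : ¬ G.Reaches v (G.T 1) := fun h => hnotboth v hvPi ⟨hr0, h⟩
          have himg : (fun u => if u ∈ G.bigPi then d0 G g u else dA u + dB u) ''
              {p | G.Adj p v} = dA '' {p | G.Adj p v} := by
            refine Set.image_congr (fun p hp => ?_)
            by_cases hpPi : p ∈ G.bigPi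
            · simp only [if_pos hpPi]
              exact (hAPi p hpPi).symm
            · have hpr0 : G.Reaches p (G.T 0) := (Relation.ReflTransGen.single hp).trans hr0
              have hpr1 : ¬ G.Reaches p (G.T 1) := fun h => hnotboth p hpPi ⟨hpr0, h⟩
              simp only [if_neg hpPi]
              rw [hBvan p hpPi hpr1, add_zero]
          rw [hBvan v hvPi hnr1, add_zero, himg]
          exact hAValid v hvPi
        · by_cases hr1 : G.Reaches v (G.T 1)
          · have himg : (fun u => if u ∈ G.bigPi then d0 G g u else dA u + dB u) ''
                {p | G.Adj p v} = dB '' {p | G.Adj p v} := by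
              refine Set.image_congr (fun p hp => ?_)
              by_cases hpPi : p ∈ G.bigPi
              · simp only [if_pos hpPi]
                exact (hBPi p hpPi).symm
              · have hpr1 : G.Reaches p (G.T 1) := (Relation.ReflTransGen.single hp).trans hr1
                have hpr0 : ¬ G.Reaches p (G.T 0) := fun h => hnotboth p hpPi ⟨h, hpr1⟩
                simp only [if_neg hpPi]
                rw [hAvan p hpPi hpr0, zero_add]
            rw [hAvan v hvPi hr0, zero_add, himg]
            exact hBValid v hvPi
          · rw [hAvan v hvPi hr0, hBvan v hvPi hr1, add_zero]
            exact Submodule.zero_mem _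
    · intro j
      fin_cases j
      · show (if G.T 0 ∈ G.bigPi then d0 G g (G.T 0) else dA (G.T 0) + dB (G.T 0)) = _
        rw [if_neg hT0, hAt,
          hBvan (G.T 0) hT0 (fun h => hnotboth (G.T 0) hT0 ⟨Relation.ReflTransGen.refl, h⟩),
          add_zero]
      · show (if G.T 1 ∈ G.bigPi then d0 G g (G.T 1) else dA (G.T 1) + dB (G.T 1)) = _
        rw [if_neg hT1, hBt,
          hAvan (G.T 1) hT1 (fun h => hnotboth (G.T 1) hT1 ⟨h, Relation.ReflTransGen.refl⟩),
          zero_add]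

end SumNetworksPaper
end

section
/- Let RG be a region graph with exactly three terminal vertices (n = 3) satisfying Assumption 1, and suppose RG is terminal-separable. If condition (C-IR) holds, then RG is not feasible. -/
namespace SumNetworksPaper

namespace RegionGraph

variable {n : ℕ} (G : RegionGraph n)

lemma adj_wf : WellFounded G.Adj := by
  letI := G.fintypeV
  letI : IsTrans G.V (Relation.TransGen G.Adj) := ⟨fun _ _ _ => Relation.TransGen.trans⟩
  letI : IsIrrefl G.V (Relation.TransGen G.Adj) := ⟨G.acyclic⟩
  exact Subrelation.wf (fun h => Relation.TransGen.single h)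
    (Finite.wellFounded_of_trans_of_irrefl _)

lemma not_source_of_parent {p v : G.V} (h : G.Adj p v) : ∀ i : Fin 3, v ≠ G.S i := by
  intro i hv
  exact G.source_no_parent i p (hv ▸ h)

lemma reg_span {F : Type} [Field F] {d : G.V → Fin 3 → F}
    (hd : G.IsLinearCode F d) {Θ : Set G.V} {R : G.V} (hR : R ∈ G.reg Θ) :
    d R ∈ Submodule.span F (d '' Θ) := by
  have hR' : SuperReg G.Adj Θ R := hR
  induction hR' with
  | base h => exact Submodule.subset_span ⟨_, h, rfl⟩
  | @step R' hex hall ih =>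
    have hns : ∀ i : Fin 3, R' ≠ G.S i := by
      obtain ⟨p, hp⟩ := hex
      exact G.not_source_of_parent hp
    refine Submodule.span_le.mpr ?_ (hd.2 R' hns)
    rintro _ ⟨p, hp, rfl⟩
    exact ih p hp (hall p hp)

lemma sources_mem_bigPi (i : Fin 3) : G.S i ∈ G.bigPi := by
  fin_cases i
  · exact Or.inl (Or.inl (SuperReg.base (Set.mem_insert _ _)))
  · exact Or.inl (Or.inl (SuperReg.base (Set.mem_insert_of_mem _ rfl)))
  · exact Or.inr (SuperReg.base (Set.mem_insert_of_mem _ rfl))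

lemma mem_omega_singleton (hTS : G.TerminalSeparable) {R : G.V} (hR : R ∉ G.bigPi)
    {j : Fin n} (hreach : G.Reaches R (G.T j)) : R ∈ G.Omega ({j} : Set (Fin n)) := by
  set I : Set (Fin n) := {j' | G.Reaches R (G.T j')} with hI
  have hRI : R ∈ G.Omega I := ⟨hR, fun j' => Iff.rfl⟩
  have hIj : I = {j} := by
    apply Set.eq_singleton_iff_unique_mem.mpr
    refine ⟨hreach, fun j' hj' => ?_⟩
    by_contra hne
    have h2 : ({j', j} : Set (Fin n)) ⊆ I := by
      intro x hx
      simp only [Set.mem_insert_iff, Set.mem_singleton_iff] at hx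
      rcases hx with rfl | rfl
      · exact hj'
      · exact hreach
    have hcard : 1 < I.ncard := by
      have := Set.ncard_le_ncard h2 I.toFinite
      rw [Set.ncard_pair hne] at this
      omega
    have hemp := hTS I hcard
    rw [hemp] at hRI
    exact hRI
  rw [hIj] at hRI
  exact hRI

lemma one_mem_span_lambda {F : Type} [Field F] {d : G.V → Fin 3 → F}
    (hA : G.Assumption1) (hTS : G.TerminalSeparable)
    (hd : G.IsLinearCode F d) (j : Fin n) (hT : d (G.T j) = fun _ => 1) :
    (fun _ => (1 : F)) ∈ Submodule.span F (d '' G.Lambda {j}) := by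
  have key : ∀ R : G.V, R ∈ G.Omega ({j} : Set (Fin n)) →
      d R ∈ Submodule.span F (d '' G.Lambda {j}) := by
    intro R
    refine G.adj_wf.induction
      (C := fun R => R ∈ G.Omega ({j} : Set (Fin n)) →
        d R ∈ Submodule.span F (d '' G.Lambda {j})) R ?_
    intro R ih hR
    have hns : ∀ i : Fin 3, R ≠ G.S i := by
      intro i hRS
      exact hR.1 (hRS ▸ G.sources_mem_bigPi i)
    refine Submodule.span_le.mpr ?_ (hd.2 R hns)
    rintro _ ⟨p, hp, rfl⟩
    by_cases hpPi : p ∈ G.bigPi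
    · exact Submodule.subset_span ⟨p, ⟨hpPi, R, hp, hR⟩, rfl⟩
    · have hpr : G.Reaches p (G.T j) :=
        Relation.ReflTransGen.head hp ((hR.2 j).mp rfl)
      exact ih p hp (G.mem_omega_singleton hTS hpPi hpr)
  have hTΩ : G.T j ∈ G.Omega ({j} : Set (Fin n)) :=
    G.mem_omega_singleton hTS (hA j) Relation.ReflTransGen.refl
  have hmem := key _ hTΩ
  rwa [hT] at hmem

end RegionGraph

lemma coord_zero_of_span_pair {F : Type} [Field F] {u v x : Fin 3 → F} {i : Fin 3}
    (hx : x ∈ Submodule.span F ({u, v} : Set (Fin 3 → F)))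
    (hu : u i = 0) (hv : v i = 0) : x i = 0 := by
  obtain ⟨a, b, hab⟩ := Submodule.mem_span_pair.mp hx
  simpa [hu, hv] using (congrFun hab i).symm

/-- If condition (C-IR) holds for a terminal-separable region graph with
exactly three terminals (satisfying Assumption 1), then it is not feasible. -/
theorem CIR_implies_not_feasible (G : RegionGraph 3)
    (hA : G.Assumption1) (hTS : G.TerminalSeparable)
    (hcir : G.CIR) :
    ¬ G.Feasible := by
  rintro ⟨F, _, _, d, hcode, hterm⟩
  obtain ⟨σ, τ, P₁, P₂, hP1, hP2, hL0, hL1, hL2⟩ := hcir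
  have hone : ∀ j : Fin 3, (fun _ => (1 : F)) ∈ Submodule.span F (d '' G.Lambda {j}) :=
    fun j => G.one_mem_span_lambda hA hTS hcode j (hterm j)
  have hdS : ∀ i : Fin 3, d (G.S i) = Pi.single i 1 := hcode.1
  have h01 : σ 0 ≠ σ 1 := σ.injective.ne (by decide)
  have h02 : σ 0 ≠ σ 2 := σ.injective.ne (by decide)
  have h12 : σ 1 ≠ σ 2 := σ.injective.ne (by decide)
  have s00 : d (G.S (σ 0)) (σ 0) = 1 := by rw [hdS]; exact Pi.single_eq_same _ _
  have s01 : d (G.S (σ 0)) (σ 1) = 0 := by rw [hdS]; exact Pi.single_eq_of_ne h01.symm _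
  have s02 : d (G.S (σ 0)) (σ 2) = 0 := by rw [hdS]; exact Pi.single_eq_of_ne h02.symm _
  have s21 : d (G.S (σ 2)) (σ 1) = 0 := by rw [hdS]; exact Pi.single_eq_of_ne h12 _
  -- coordinates of d P₁
  have hP1span : d P₁ ∈ Submodule.span F {d (G.S (σ 1)), d (G.S (σ 2))} := by
    have h := G.reg_span hcode hP1.1
    rwa [Set.image_pair] at h
  have hp0 : d P₁ (σ 0) = 0 := by
    refine coord_zero_of_span_pair hP1span ?_ ?_
    · rw [hdS]; exact Pi.single_eq_of_ne h01 _
    · rw [hdS]; exact Pi.single_eq_of_ne h02 _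
  -- coordinates of d P₂
  have hP2span : d P₂ ∈ Submodule.span F {d (G.S (σ 0)), d (G.S (σ 1))} := by
    have h := G.reg_span hcode hP2.1
    rwa [Set.image_pair] at h
  have hq2 : d P₂ (σ 2) = 0 := by
    refine coord_zero_of_span_pair hP2span ?_ ?_
    · rw [hdS]; exact Pi.single_eq_of_ne h02.symm _
    · rw [hdS]; exact Pi.single_eq_of_ne h12.symm _
  -- first terminal equation
  have hα0 := hone (τ 0)
  rw [hL0, Set.image_pair] at hα0
  obtain ⟨a, b, hab⟩ := Submodule.mem_span_pair.mp hα0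
  have eb1 : b * d P₁ (σ 1) = 1 := by
    have h := congrFun hab (σ 1); simpa [s01] using h
  have eb2 : b * d P₁ (σ 2) = 1 := by
    have h := congrFun hab (σ 2); simpa [s02] using h
  -- second terminal equation
  have hα1 := hone (τ 1)
  rw [hL1, Set.image_pair] at hα1
  obtain ⟨c, e, hce⟩ := Submodule.mem_span_pair.mp hα1
  have ec2 : c * d P₁ (σ 2) = 1 := by
    have h := congrFun hce (σ 2); simpa [hq2] using h
  have ece : c * d P₁ (σ 1) + e * d P₂ (σ 1) = 1 := by
    have h := congrFun hce (σ 1); simpa using h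
  have ee0 : e * d P₂ (σ 0) = 1 := by
    have h := congrFun hce (σ 0); simpa [hp0] using h
  have hbne : b ≠ 0 := left_ne_zero_of_mul_eq_one eb1
  have hpp : d P₁ (σ 1) = d P₁ (σ 2) := mul_left_cancel₀ hbne (eb1.trans eb2.symm)
  have ec1 : c * d P₁ (σ 1) = 1 := by rw [hpp]; exact ec2
  have eq1 : e * d P₂ (σ 1) = 0 := by linear_combination ece - ec1
  have hene : e ≠ 0 := left_ne_zero_of_mul_eq_one ee0
  have hq1 : d P₂ (σ 1) = 0 := by
    rcases mul_eq_zero.mp eq1 with h | h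
    · exact absurd h hene
    · exact h
  -- third terminal equation yields a contradiction
  have hker : ∀ Q ∈ G.Lambda ({τ 2} : Set (Fin 3)), d Q (σ 1) = 0 := by
    intro Q hQ
    rcases hL2 hQ with h | h
    · have hs := G.reg_span hcode h
      rw [Set.image_pair] at hs
      exact coord_zero_of_span_pair hs s01 hq1
    · have hs := G.reg_span hcode h
      rw [Set.image_pair] at hs
      exact coord_zero_of_span_pair hs s01 s21
  have hle : Submodule.span F (d '' G.Lambda {τ 2}) ≤
      LinearMap.ker (LinearMap.proj (σ 1) : (Fin 3 → F) →ₗ[F] F) := by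
    rw [Submodule.span_le]
    rintro _ ⟨Q, hQ, rfl⟩
    rw [SetLike.mem_coe, LinearMap.mem_ker]
    simpa using hker Q hQ
  have h10 : (1 : F) = 0 := by
    simpa using LinearMap.mem_ker.mp (hle (hone (τ 2)))
  exact one_ne_zero h10

end SumNetworksPaper
end
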